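/- arXiv:1910.02466 — 2 statements merged into one kernel-verified Lean document; each statement's English description precedes it below -/
import Mathlib

section
/- The hitting-time map (0, k) ∋ h₀ ↦ T_{h=k}(h₀) is continuous. -/
/-!
For an equation `φ' = p + q φ` with `p ≥ 0`, the integrating factor `exp (-∫ q)` makes
`φ · exp (-∫ q)` monotone. Applied in turn to `f`, `g` and `h`, this gives `f > 0`, `g > 0` for
`t > 0` and `h > 0`, so `h' = 2gh/α > 0`: `h` is strictly increasing, reaches the level `k` at
most once, and crosses it there.

While `h ≤ R`, Grönwall bounds `f + g`, so trajectories stay in a fixed compact ball on which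
the polynomial vector field is Lipschitz, and a second Grönwall estimate gives
`|h_x(t) - h_y(t)| ≤ E |x - y|`. Slightly before `T x₀` the solution from `x₀` is a definite
amount below `k`, slightly after it a definite amount above `k`; for `y` close to `x₀` the
solution from `y` is then still below `k` at the first time and cannot stay below `k` up to
the second, which pins `T y` between them.
-/

open Set

/-- The forward ODE system of Proposition A.1: on a set `s ⊆ ℝ`,
`h' = (2g/α)·h` with `h 0 = h₀`, `f' = 1 + f·((a²σ_D²/(2I))·h − C₀)` with `f 0 = 1`,
and `g' = aσ_D²·f − (2/α)·g² + g·((a²σ_D²/(2I))·h − C₀)` with `g 0 = 0`. -/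
def FwdSol (I : ℕ) (C₀ a σD α h₀ : ℝ) (h f g : ℝ → ℝ) (s : Set ℝ) : Prop :=
  h 0 = h₀ ∧ f 0 = 1 ∧ g 0 = 0 ∧
    ∀ t ∈ s,
      HasDerivWithinAt h (2 * g t / α * h t) s t ∧
      HasDerivWithinAt f (1 + f t * (a ^ 2 * σD ^ 2 / (2 * (I : ℝ)) * h t - C₀)) s t ∧
      HasDerivWithinAt g
        (a * σD ^ 2 * f t - 2 / α * g t ^ 2 +
          g t * (a ^ 2 * σD ^ 2 / (2 * (I : ℝ)) * h t - C₀)) s t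

open Filter Topology Real

section IntegratingFactor

variable {φ p q : ℝ → ℝ} {b : ℝ}

lemma exists_primitive_of_continuousOn_Icc (hq : ContinuousOn q (Icc 0 b)) :
    ∃ Q : ℝ → ℝ, ContinuousOn Q (Icc 0 b) ∧ ∀ t ∈ Ioo 0 b, HasDerivAt Q (q t) t := by
  rcases lt_or_ge b 0 with hb | hb
  · refine ⟨0, continuousOn_const, fun t ht => ?_⟩
    exact absurd (ht.1.trans ht.2) hb.not_gt
  have hint : IntervalIntegrable q MeasureTheory.volume 0 b := hq.intervalIntegrable_of_Icc hb
  refine ⟨fun t => ∫ s in (0)..t, q s, ?_, fun t ht => ?_⟩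
  · simpa [uIcc_of_le hb] using
      intervalIntegral.continuousOn_primitive_interval' hint left_mem_uIcc
  · exact intervalIntegral.integral_hasDerivAt_right
      ((hq.mono (Icc_subset_Icc_right ht.2.le)).intervalIntegrable_of_Icc ht.1.le)
      ((hq.mono Ioo_subset_Icc_self).stronglyMeasurableAtFilter isOpen_Ioo t ht)
      (hq.continuousAt (Icc_mem_nhds ht.1 ht.2))

lemma hasDerivAt_mul_exp_neg {Q : ℝ → ℝ} {t : ℝ} (hφ : HasDerivAt φ (p t + q t * φ t) t)
    (hQ : HasDerivAt Q (q t) t) :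
    HasDerivAt (fun s => φ s * exp (-Q s)) (p t * exp (-Q t)) t :=
  (hφ.mul hQ.neg.exp).congr_deriv (by simp only [Pi.neg_apply]; ring)

theorem pos_of_hasDerivAt_eq_add_mul (hφ : ContinuousOn φ (Icc 0 b))
    (hq : ContinuousOn q (Icc 0 b)) (hφ' : ∀ t ∈ Ioo 0 b, HasDerivAt φ (p t + q t * φ t) t)
    (hp : ∀ t ∈ Ioo 0 b, 0 ≤ p t) (h0 : 0 < φ 0) : ∀ t ∈ Icc 0 b, 0 < φ t := by
  obtain ⟨Q, hQc, hQ⟩ := exists_primitive_of_continuousOn_Icc hq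
  have hmono : MonotoneOn (fun s => φ s * exp (-Q s)) (Icc 0 b) := by
    refine monotoneOn_of_hasDerivWithinAt_nonneg (f' := fun t => p t * exp (-Q t))
      (convex_Icc 0 b) (hφ.mul hQc.neg.rexp) ?_ ?_
    · rw [interior_Icc]
      exact fun t ht => (hasDerivAt_mul_exp_neg (hφ' t ht) (hQ t ht)).hasDerivWithinAt
    · rw [interior_Icc]
      exact fun t ht => mul_nonneg (hp t ht) (exp_pos _).le
  intro t ht
  have h0t := hmono ⟨le_rfl, ht.1.trans ht.2⟩ ht ht.1
  exact (mul_pos_iff_of_pos_right (exp_pos (-Q t))).1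
    ((mul_pos h0 (exp_pos _)).trans_le h0t)

theorem pos_of_hasDerivAt_eq_add_mul_of_pos (hφ : ContinuousOn φ (Icc 0 b))
    (hq : ContinuousOn q (Icc 0 b)) (hφ' : ∀ t ∈ Ioo 0 b, HasDerivAt φ (p t + q t * φ t) t)
    (hp : ∀ t ∈ Ioo 0 b, 0 < p t) (h0 : 0 ≤ φ 0) : ∀ t ∈ Ioc 0 b, 0 < φ t := by
  obtain ⟨Q, hQc, hQ⟩ := exists_primitive_of_continuousOn_Icc hq
  have hmono : StrictMonoOn (fun s => φ s * exp (-Q s)) (Icc 0 b) := by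
    refine strictMonoOn_of_hasDerivWithinAt_pos (f' := fun t => p t * exp (-Q t))
      (convex_Icc 0 b) (hφ.mul hQc.neg.rexp) ?_ ?_
    · rw [interior_Icc]
      exact fun t ht => (hasDerivAt_mul_exp_neg (hφ' t ht) (hQ t ht)).hasDerivWithinAt
    · rw [interior_Icc]
      exact fun t ht => mul_pos (hp t ht) (exp_pos _)
  intro t ht
  have h0t := hmono ⟨le_rfl, ht.1.le.trans ht.2⟩ ⟨ht.1.le, ht.2⟩ ht.1
  exact (mul_pos_iff_of_pos_right (exp_pos (-Q t))).1
    ((mul_nonneg h0 (exp_pos _).le).trans_lt h0t)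

end IntegratingFactor

noncomputable def fwdField (I : ℕ) (C₀ a σD α : ℝ) (p : ℝ × ℝ × ℝ) : ℝ × ℝ × ℝ :=
  (2 * p.2.2 / α * p.1, 1 + p.2.1 * (a ^ 2 * σD ^ 2 / (2 * (I : ℝ)) * p.1 - C₀),
    a * σD ^ 2 * p.2.1 - 2 / α * p.2.2 ^ 2 +
      p.2.2 * (a ^ 2 * σD ^ 2 / (2 * (I : ℝ)) * p.1 - C₀))

lemma contDiff_fwdField (I : ℕ) (C₀ a σD α : ℝ) : ContDiff ℝ 1 (fwdField I C₀ a σD α) := by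
  unfold fwdField
  fun_prop

lemma Icc_subset_setOf_coe_lt {c : ℝ} {τ : WithTop ℝ} (hc : (c : WithTop ℝ) < τ) :
    Icc 0 c ⊆ {t : ℝ | 0 ≤ t ∧ (t : WithTop ℝ) < τ} :=
  fun _ ht => ⟨ht.1, (WithTop.coe_le_coe.2 ht.2).trans_lt hc⟩

namespace FwdSol

variable {I : ℕ} {C₀ a σD α h₀ b R : ℝ} {h f g : ℝ → ℝ} {s s' : Set ℝ} {t : ℝ}

lemma mono (hs : FwdSol I C₀ a σD α h₀ h f g s) (hs' : s' ⊆ s) :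
    FwdSol I C₀ a σD α h₀ h f g s' :=
  ⟨hs.1, hs.2.1, hs.2.2.1, fun t ht =>
    ⟨(hs.2.2.2 t (hs' ht)).1.mono hs', (hs.2.2.2 t (hs' ht)).2.1.mono hs',
      (hs.2.2.2 t (hs' ht)).2.2.mono hs'⟩⟩

lemma hasDerivWithinAt_h (hs : FwdSol I C₀ a σD α h₀ h f g s) (ht : t ∈ s) :
    HasDerivWithinAt h (2 * g t / α * h t) s t :=
  (hs.2.2.2 t ht).1

lemma hasDerivWithinAt_f (hs : FwdSol I C₀ a σD α h₀ h f g s) (ht : t ∈ s) :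
    HasDerivWithinAt f (1 + f t * (a ^ 2 * σD ^ 2 / (2 * (I : ℝ)) * h t - C₀)) s t :=
  (hs.2.2.2 t ht).2.1

lemma hasDerivWithinAt_g (hs : FwdSol I C₀ a σD α h₀ h f g s) (ht : t ∈ s) :
    HasDerivWithinAt g (a * σD ^ 2 * f t - 2 / α * g t ^ 2 +
      g t * (a ^ 2 * σD ^ 2 / (2 * (I : ℝ)) * h t - C₀)) s t :=
  (hs.2.2.2 t ht).2.2

lemma h_zero (hs : FwdSol I C₀ a σD α h₀ h f g s) : h 0 = h₀ := hs.1

lemma f_zero (hs : FwdSol I C₀ a σD α h₀ h f g s) : f 0 = 1 := hs.2.1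

lemma g_zero (hs : FwdSol I C₀ a σD α h₀ h f g s) : g 0 = 0 := hs.2.2.1

lemma continuousOn_h (hs : FwdSol I C₀ a σD α h₀ h f g s) : ContinuousOn h s :=
  fun _ ht => (hs.hasDerivWithinAt_h ht).continuousWithinAt

lemma continuousOn_f (hs : FwdSol I C₀ a σD α h₀ h f g s) : ContinuousOn f s :=
  fun _ ht => (hs.hasDerivWithinAt_f ht).continuousWithinAt

lemma continuousOn_g (hs : FwdSol I C₀ a σD α h₀ h f g s) : ContinuousOn g s :=
  fun _ ht => (hs.hasDerivWithinAt_g ht).continuousWithinAt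

lemma f_pos (hs : FwdSol I C₀ a σD α h₀ h f g (Icc 0 b)) : ∀ t ∈ Icc 0 b, 0 < f t := by
  refine pos_of_hasDerivAt_eq_add_mul (p := 1)
    (q := fun t => a ^ 2 * σD ^ 2 / (2 * (I : ℝ)) * h t - C₀) hs.continuousOn_f
    ((continuousOn_const.mul hs.continuousOn_h).sub continuousOn_const) (fun t ht => ?_)
    (fun _ _ => zero_le_one) (hs.f_zero ▸ one_pos)
  exact ((hs.hasDerivWithinAt_f (Ioo_subset_Icc_self ht)).hasDerivAt
    (Icc_mem_nhds ht.1 ht.2)).congr_deriv (by simp only [Pi.one_apply]; ring)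

lemma g_pos (ha : 0 < a) (hσD : 0 < σD) (hs : FwdSol I C₀ a σD α h₀ h f g (Icc 0 b)) :
    ∀ t ∈ Ioc 0 b, 0 < g t := by
  have hhc := hs.continuousOn_h
  have hgc := hs.continuousOn_g
  refine pos_of_hasDerivAt_eq_add_mul_of_pos (p := fun t => a * σD ^ 2 * f t)
    (q := fun t => a ^ 2 * σD ^ 2 / (2 * (I : ℝ)) * h t - C₀ - 2 / α * g t)
    hgc (by fun_prop) (fun t ht => ?_)
    (fun t ht => by have := hs.f_pos t (Ioo_subset_Icc_self ht); positivity) hs.g_zero.ge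
  exact ((hs.hasDerivWithinAt_g (Ioo_subset_Icc_self ht)).hasDerivAt
    (Icc_mem_nhds ht.1 ht.2)).congr_deriv (by ring)

lemma h_pos (hh₀ : 0 < h₀) (hs : FwdSol I C₀ a σD α h₀ h f g (Icc 0 b)) :
    ∀ t ∈ Icc 0 b, 0 < h t := by
  have hgc := hs.continuousOn_g
  refine pos_of_hasDerivAt_eq_add_mul (p := 0) (q := fun t => 2 * g t / α) hs.continuousOn_h
    (by fun_prop) (fun t ht => ?_) (fun _ _ => le_rfl)
    (hs.h_zero ▸ hh₀)
  exact ((hs.hasDerivWithinAt_h (Ioo_subset_Icc_self ht)).hasDerivAt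
    (Icc_mem_nhds ht.1 ht.2)).congr_deriv (by simp only [Pi.zero_apply]; ring)

lemma strictMonoOn_h (ha : 0 < a) (hσD : 0 < σD) (hα : 0 < α) (hh₀ : 0 < h₀)
    (hs : FwdSol I C₀ a σD α h₀ h f g (Icc 0 b)) : StrictMonoOn h (Icc 0 b) := by
  refine strictMonoOn_of_hasDerivWithinAt_pos (f' := fun t => 2 * g t / α * h t)
    (convex_Icc 0 b) hs.continuousOn_h
    (fun t ht => ?_) (fun t ht => ?_) <;> simp only [interior_Icc] at ht ⊢
  · exact (hs.hasDerivWithinAt_h (Ioo_subset_Icc_self ht)).mono Ioo_subset_Icc_self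
  · have := hs.g_pos ha hσD t (Ioo_subset_Ioc_self ht)
    have := hs.h_pos hh₀ t (Ioo_subset_Icc_self ht)
    positivity

lemma g_nonneg (ha : 0 < a) (hσD : 0 < σD) (hs : FwdSol I C₀ a σD α h₀ h f g (Icc 0 b)) :
    ∀ t ∈ Icc 0 b, 0 ≤ g t := by
  intro t ht
  rcases ht.1.eq_or_lt with rfl | ht0
  · exact hs.g_zero.ge
  · exact (hs.g_pos ha hσD t ⟨ht0, ht.2⟩).le

lemma f_add_g_le (ha : 0 < a) (hσD : 0 < σD) (hα : 0 < α)
    (hs : FwdSol I C₀ a σD α h₀ h f g (Icc 0 b)) (hR : ∀ t ∈ Icc 0 b, h t ≤ R) :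
    ∀ t ∈ Icc 0 b, f t + g t ≤
      gronwallBound 1 (a ^ 2 * σD ^ 2 / (2 * (I : ℝ)) * R + |C₀| + a * σD ^ 2) 1 t := by
  have hderiv : ∀ t ∈ Ico 0 b, HasDerivWithinAt (f + g)
      (1 + f t * (a ^ 2 * σD ^ 2 / (2 * (I : ℝ)) * h t - C₀) + (a * σD ^ 2 * f t -
        2 / α * g t ^ 2 + g t * (a ^ 2 * σD ^ 2 / (2 * (I : ℝ)) * h t - C₀))) (Ici t) t :=
    fun t ht => ((hs.hasDerivWithinAt_f (Ico_subset_Icc_self ht)).add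
      (hs.hasDerivWithinAt_g (Ico_subset_Icc_self ht))).mono_of_mem_nhdsWithin
      (Icc_mem_nhdsGE_of_mem ht)
  have hbound := le_gronwallBound_of_liminf_deriv_right_le (δ := 1) (ε := 1)
    (K := a ^ 2 * σD ^ 2 / (2 * (I : ℝ)) * R + |C₀| + a * σD ^ 2)
    (hs.continuousOn_f.add hs.continuousOn_g)
    (fun t ht r hr => (hderiv t ht).liminf_right_slope_le hr)
    (by simp [hs.f_zero, hs.g_zero]) (fun t ht => ?_)
  · simpa using hbound
  have hIcc := Ico_subset_Icc_self ht
  have hc : a ^ 2 * σD ^ 2 / (2 * (I : ℝ)) * h t - C₀ ≤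
      a ^ 2 * σD ^ 2 / (2 * (I : ℝ)) * R + |C₀| := by
    have := mul_le_mul_of_nonneg_left (hR t hIcc)
      (by positivity : 0 ≤ a ^ 2 * σD ^ 2 / (2 * (I : ℝ)))
    linarith [neg_le_abs C₀]
  have hf := hs.f_pos t hIcc
  have hg := hs.g_nonneg ha hσD t hIcc
  have : 0 ≤ 2 / α * g t ^ 2 := by positivity
  have : 0 ≤ a * σD ^ 2 * g t := by positivity
  simp only [Pi.add_apply]
  nlinarith [mul_le_mul_of_nonneg_left hc hf.le, mul_le_mul_of_nonneg_left hc hg]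

lemma continuousOn_traj (hs : FwdSol I C₀ a σD α h₀ h f g s) :
    ContinuousOn (fun t => (h t, f t, g t)) s :=
  hs.continuousOn_h.prodMk (hs.continuousOn_f.prodMk hs.continuousOn_g)

lemma hasDerivWithinAt_traj (hs : FwdSol I C₀ a σD α h₀ h f g (Icc 0 b)) (ht : t ∈ Ico 0 b) :
    HasDerivWithinAt (fun t => (h t, f t, g t)) (fwdField I C₀ a σD α (h t, f t, g t))
      (Ici t) t :=
  have hIcc := Ico_subset_Icc_self ht
  ((hs.hasDerivWithinAt_h hIcc).prodMk ((hs.hasDerivWithinAt_f hIcc).prodMk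
    (hs.hasDerivWithinAt_g hIcc))).mono_of_mem_nhdsWithin (Icc_mem_nhdsGE_of_mem ht)

lemma traj_mem_closedBall {B : ℝ} (ha : 0 < a) (hσD : 0 < σD) (hα : 0 < α) (hh₀ : 0 < h₀)
    (hs : FwdSol I C₀ a σD α h₀ h f g (Icc 0 b)) (hR : ∀ t ∈ Icc 0 b, h t ≤ R) (hbB : b ≤ B) :
    ∀ t ∈ Icc 0 b, (h t, f t, g t) ∈ Metric.closedBall 0
      (max R (gronwallBound 1 (a ^ 2 * σD ^ 2 / (2 * (I : ℝ)) * R + |C₀| + a * σD ^ 2) 1 B)) := by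
  intro t ht
  have hR0 : 0 ≤ R := (hs.h_pos hh₀ t ht).le.trans (hR t ht)
  have hfg : f t + g t ≤
      gronwallBound 1 (a ^ 2 * σD ^ 2 / (2 * (I : ℝ)) * R + |C₀| + a * σD ^ 2) 1 B :=
    (hs.f_add_g_le ha hσD hα hR t ht).trans
      (gronwallBound_mono zero_le_one zero_le_one (by positivity) (ht.2.trans hbB))
  have hf := hs.f_pos t ht
  have hg := hs.g_nonneg ha hσD t ht
  rw [mem_closedBall_zero_iff, Prod.norm_mk, Prod.norm_mk, Real.norm_eq_abs, Real.norm_eq_abs,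
    Real.norm_eq_abs, abs_of_pos (hs.h_pos hh₀ t ht), abs_of_pos hf, abs_of_nonneg hg]
  exact max_le_max (hR t ht) (max_le (by linarith) (by linarith))

lemma h_le_of_eq (ha : 0 < a) (hσD : 0 < σD) (hα : 0 < α) (hh₀ : 0 < h₀) {k : ℝ}
    (hs : FwdSol I C₀ a σD α h₀ h f g (Icc 0 b)) (hk : h b = k) : ∀ t ∈ Icc 0 b, h t ≤ k := by
  intro t ht
  rw [← hk]
  exact (hs.strictMonoOn_h ha hσD hα hh₀).monotoneOn ht ⟨ht.1.trans ht.2, le_rfl⟩ ht.2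

lemma sInf_mem_hitSet {τ : WithTop ℝ} {k : ℝ} (ha : 0 < a) (hσD : 0 < σD) (hα : 0 < α)
    (hh₀ : 0 < h₀) (hs : FwdSol I C₀ a σD α h₀ h f g {t | 0 ≤ t ∧ (t : WithTop ℝ) < τ})
    (hne : {t : ℝ | 0 < t ∧ (t : WithTop ℝ) < τ ∧ h t = k}.Nonempty) :
    sInf {t : ℝ | 0 < t ∧ (t : WithTop ℝ) < τ ∧ h t = k} ∈
      {t : ℝ | 0 < t ∧ (t : WithTop ℝ) < τ ∧ h t = k} := by
  obtain ⟨t, ht⟩ := hne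
  -- `h` is strictly increasing, so it hits `k` at most once.
  have hsub : {t : ℝ | 0 < t ∧ (t : WithTop ℝ) < τ ∧ h t = k}.Subsingleton := by
    intro u hu v hv
    by_contra! huv
    wlog hlt : u < v generalizing u v
    · exact this hv hu huv.symm (huv.lt_or_gt.resolve_left hlt)
    have hsv := hs.mono (Icc_subset_setOf_coe_lt hv.2.1)
    exact (hsv.strictMonoOn_h ha hσD hα hh₀ ⟨hu.1.le, hlt.le⟩ ⟨hv.1.le, le_rfl⟩ hlt).ne
      (hu.2.2.trans hv.2.2.symm)
  rw [hsub.eq_singleton_of_mem ht, csInf_singleton]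
  exact mem_singleton t

end FwdSol

-- An a priori bound keeps both trajectories in one compact ball, on which the polynomial vector
-- field is Lipschitz; Grönwall then controls their distance.
theorem FwdSol.exists_abs_sub_h_le (I : ℕ) (C₀ : ℝ) {a σD α : ℝ} (ha : 0 < a) (hσD : 0 < σD)
    (hα : 0 < α) (R B : ℝ) :
    ∃ E : ℝ, ∀ ⦃b x y : ℝ⦄ ⦃h₁ f₁ g₁ h₂ f₂ g₂ : ℝ → ℝ⦄, 0 ≤ b → b ≤ B → 0 < x → 0 < y →
      FwdSol I C₀ a σD α x h₁ f₁ g₁ (Icc 0 b) → FwdSol I C₀ a σD α y h₂ f₂ g₂ (Icc 0 b) →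
      (∀ t ∈ Icc 0 b, h₁ t ≤ R) → (∀ t ∈ Icc 0 b, h₂ t ≤ R) → |h₁ b - h₂ b| ≤ E * |x - y| := by
  set Q := max R (gronwallBound 1 (a ^ 2 * σD ^ 2 / (2 * (I : ℝ)) * R + |C₀| + a * σD ^ 2) 1 B)
  obtain ⟨K, hK⟩ := (contDiff_fwdField I C₀ a σD α).contDiffOn.exists_lipschitzOnWith
    one_ne_zero (convex_closedBall 0 Q) (isCompact_closedBall 0 Q)
  refine ⟨exp (K * B), fun b x y h₁ f₁ g₁ h₂ f₂ g₂ hb hbB hx hy hs₁ hs₂ hR₁ hR₂ => ?_⟩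
  have hdist := dist_le_of_trajectories_ODE_of_mem (v := fun _ => fwdField I C₀ a σD α)
    (s := fun _ => Metric.closedBall 0 Q) (δ := |x - y|) (fun _ _ => hK)
    hs₁.continuousOn_traj (fun t ht => hs₁.hasDerivWithinAt_traj ht)
    (fun t ht => hs₁.traj_mem_closedBall ha hσD hα hx hR₁ hbB t (Ico_subset_Icc_self ht))
    hs₂.continuousOn_traj (fun t ht => hs₂.hasDerivWithinAt_traj ht)
    (fun t ht => hs₂.traj_mem_closedBall ha hσD hα hy hR₂ hbB t (Ico_subset_Icc_self ht))
    (by simp [hs₁.h_zero, hs₁.f_zero, hs₁.g_zero, hs₂.h_zero, hs₂.f_zero, hs₂.g_zero,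
      Prod.dist_eq, Real.dist_eq])
    b ⟨hb, le_rfl⟩
  calc |h₁ b - h₂ b| ≤ dist (h₁ b, f₁ b, g₁ b) (h₂ b, f₂ b, g₂ b) := by
        rw [← Real.dist_eq, Prod.dist_eq]; exact le_max_left _ _
    _ ≤ |x - y| * exp (K * (b - 0)) := hdist
    _ ≤ exp (K * B) * |x - y| := by
        rw [mul_comm, sub_zero]; gcongr

lemma exists_between_of_coe_lt {T c : ℝ} {τ : WithTop ℝ} (hT : (T : WithTop ℝ) < τ)
    (hc : T < c) : ∃ b : ℝ, T < b ∧ b < c ∧ (b : WithTop ℝ) < τ := by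
  induction τ using WithTop.recTopCoe with
  | top =>
    obtain ⟨b, hTb, hbc⟩ := exists_between hc
    exact ⟨b, hTb, hbc, WithTop.coe_lt_top b⟩
  | coe u =>
    obtain ⟨b, hTb, hb⟩ := exists_between (lt_min hc (WithTop.coe_lt_coe.1 hT))
    exact ⟨b, hTb, hb.trans_le (min_le_left _ _),
      WithTop.coe_lt_coe.2 (hb.trans_le (min_le_right _ _))⟩

lemma eventually_mul_abs_sub_lt {x₀ m : ℝ} (E : ℝ) (hm : 0 < m) :
    ∀ᶠ y in 𝓝 x₀, E * |x₀ - y| < m := by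
  have hcont : Continuous fun y => E * |x₀ - y| := by fun_prop
  exact hcont.continuousAt.eventually_lt continuousAt_const (by simpa using hm)

section HittingTime

variable {I : ℕ} {C₀ a σD α k x₀ c : ℝ} {τ : ℝ → WithTop ℝ} {H F G : ℝ → ℝ → ℝ} {T : ℝ → ℝ}

theorem eventually_hitTime_lt (ha : 0 < a) (hσD : 0 < σD) (hα : 0 < α)
    (hpos : ∀ᶠ y in 𝓝 x₀, 0 < y)
    (hsol : ∀ᶠ y in 𝓝 x₀,
      FwdSol I C₀ a σD α y (H y) (F y) (G y) {t | 0 ≤ t ∧ (t : WithTop ℝ) < τ y})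
    (hT : ∀ᶠ y in 𝓝 x₀, 0 < T y ∧ (T y : WithTop ℝ) < τ y ∧ H y (T y) = k)
    (hc : T x₀ < c) : ∀ᶠ y in 𝓝 x₀, T y < c := by
  obtain ⟨hT₀, hT₀τ, hT₀k⟩ := hT.self_of_nhds
  obtain ⟨b, hT₀b, hbc, hbτ⟩ := exists_between_of_coe_lt hT₀τ hc
  have hb : 0 ≤ b := hT₀.le.trans hT₀b.le
  have hs₀ := hsol.self_of_nhds.mono (Icc_subset_setOf_coe_lt hbτ)
  have hmono₀ := hs₀.strictMonoOn_h ha hσD hα hpos.self_of_nhds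
  have hkb : k < H x₀ b := hT₀k ▸ hmono₀ ⟨hT₀.le, hT₀b.le⟩ ⟨hb, le_rfl⟩ hT₀b
  obtain ⟨E, hE⟩ := FwdSol.exists_abs_sub_h_le I C₀ ha hσD hα (H x₀ b) b
  filter_upwards [hpos, hsol, hT, eventually_mul_abs_sub_lt E (sub_pos.2 hkb)]
    with y hy hsy ⟨hTy, hTyτ, hTyk⟩ hyE
  by_contra! hcy
  have hbTy : b ≤ T y := (hbc.trans_le hcy).le
  have hsyT := hsy.mono (Icc_subset_setOf_coe_lt hTyτ)
  have hHy : ∀ t ∈ Icc 0 b, H y t ≤ k := fun t ht =>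
    hsyT.h_le_of_eq ha hσD hα hy hTyk t ⟨ht.1, ht.2.trans hbTy⟩
  have hdiff := hE hb le_rfl hpos.self_of_nhds hy hs₀ (hsyT.mono (Icc_subset_Icc_right hbTy))
    (fun t ht => hmono₀.monotoneOn ht ⟨hb, le_rfl⟩ ht.2) (fun t ht => (hHy t ht).trans hkb.le)
  linarith [le_abs_self (H x₀ b - H y b), hHy b ⟨hb, le_rfl⟩]

theorem eventually_lt_hitTime (ha : 0 < a) (hσD : 0 < σD) (hα : 0 < α)
    (hpos : ∀ᶠ y in 𝓝 x₀, 0 < y)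
    (hsol : ∀ᶠ y in 𝓝 x₀,
      FwdSol I C₀ a σD α y (H y) (F y) (G y) {t | 0 ≤ t ∧ (t : WithTop ℝ) < τ y})
    (hT : ∀ᶠ y in 𝓝 x₀, 0 < T y ∧ (T y : WithTop ℝ) < τ y ∧ H y (T y) = k)
    (hc : c < T x₀) : ∀ᶠ y in 𝓝 x₀, c < T y := by
  obtain ⟨hT₀, hT₀τ, hT₀k⟩ := hT.self_of_nhds
  set b := max c (T x₀ / 2)
  have hb : 0 < b := (half_pos hT₀).trans_le (le_max_right _ _)
  have hbT : b < T x₀ := max_lt hc (half_lt_self hT₀)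
  have hs₀ := hsol.self_of_nhds.mono (Icc_subset_setOf_coe_lt hT₀τ)
  have hmono₀ := hs₀.strictMonoOn_h ha hσD hα hpos.self_of_nhds
  have hbk : H x₀ b < k := hT₀k ▸ hmono₀ ⟨hb.le, hbT.le⟩ ⟨hT₀.le, le_rfl⟩ hbT
  obtain ⟨E, hE⟩ := FwdSol.exists_abs_sub_h_le I C₀ ha hσD hα k b
  filter_upwards [hpos, hsol, hT, eventually_mul_abs_sub_lt E (sub_pos.2 hbk)]
    with y hy hsy ⟨hTy, hTyτ, hTyk⟩ hyE
  refine (le_max_left c (T x₀ / 2)).trans_lt ?_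
  by_contra! hTyb
  have hsyT := hsy.mono (Icc_subset_setOf_coe_lt hTyτ)
  have hdiff := hE hTy.le hTyb hpos.self_of_nhds hy
    (hs₀.mono (Icc_subset_Icc_right (hTyb.trans hbT.le))) hsyT
    (fun t ht => hs₀.h_le_of_eq ha hσD hα hpos.self_of_nhds hT₀k t
      ⟨ht.1, ht.2.trans (hTyb.trans hbT.le)⟩)
    (hsyT.h_le_of_eq ha hσD hα hy hTyk)
  have hle := hmono₀.monotoneOn ⟨hTy.le, hTyb.trans hbT.le⟩ ⟨hb.le, hbT.le⟩ hTyb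
  linarith [neg_abs_le (H x₀ (T y) - H y (T y))]

theorem continuousAt_hitTime (ha : 0 < a) (hσD : 0 < σD) (hα : 0 < α)
    (hpos : ∀ᶠ y in 𝓝 x₀, 0 < y)
    (hsol : ∀ᶠ y in 𝓝 x₀,
      FwdSol I C₀ a σD α y (H y) (F y) (G y) {t | 0 ≤ t ∧ (t : WithTop ℝ) < τ y})
    (hT : ∀ᶠ y in 𝓝 x₀, 0 < T y ∧ (T y : WithTop ℝ) < τ y ∧ H y (T y) = k) :
    ContinuousAt T x₀ :=
  tendsto_order.2 ⟨fun _ hc => eventually_lt_hitTime ha hσD hα hpos hsol hT hc,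
    fun _ hc => eventually_hitTime_lt ha hσD hα hpos hsol hT hc⟩

end HittingTime

theorem stmt11_general (I : ℕ) (C₀ a σD α k : ℝ)
    (ha : 0 < a) (hσD : 0 < σD) (hα : 0 < α)
    (τ : ℝ → WithTop ℝ) (H F G : ℝ → ℝ → ℝ) (Thit : ℝ → ℝ)
    (hsol : ∀ h₀ ∈ Ioo (0 : ℝ) k,
      FwdSol I C₀ a σD α h₀ (H h₀) (F h₀) (G h₀) {t : ℝ | 0 ≤ t ∧ (t : WithTop ℝ) < τ h₀})
    (hhit : ∀ h₀ ∈ Ioo (0 : ℝ) k,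
      {t : ℝ | 0 < t ∧ (t : WithTop ℝ) < τ h₀ ∧ H h₀ t = k}.Nonempty ∧
      Thit h₀ = sInf {t : ℝ | 0 < t ∧ (t : WithTop ℝ) < τ h₀ ∧ H h₀ t = k}) :
    ContinuousOn Thit (Ioo 0 k) := by
  intro x₀ hx₀
  have hnear : ∀ᶠ y in 𝓝 x₀, y ∈ Ioo 0 k := Ioo_mem_nhds hx₀.1 hx₀.2
  have hThit : ∀ᶠ y in 𝓝 x₀, 0 < Thit y ∧ (Thit y : WithTop ℝ) < τ y ∧ H y (Thit y) = k := by
    filter_upwards [hnear] with y hy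
    rw [(hhit y hy).2]
    exact (hsol y hy).sInf_mem_hitSet ha hσD hα hy.1 (hhit y hy).1
  exact (continuousAt_hitTime ha hσD hα (hnear.mono fun y hy => hy.1) (hnear.mono hsol)
    hThit).continuousWithinAt

/-- the hitting-time map `h₀ ↦ T_{h=k}(h₀)` is continuous on `(0,k)`.
Setup as in Statement 9; the strict monotonicity of the hitting-time map (known from the
context) is the hypothesis `hmono`. -/
theorem stmt11 (I : ℕ) (hI : 1 ≤ I) (C₀ T a σD α k : ℝ)
    (hT : 0 < T) (ha : 0 < a) (hσD : 0 < σD) (hα : 0 < α) (hk : 0 < k)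
    (τ : ℝ → WithTop ℝ) (H F G : ℝ → ℝ → ℝ) (Thit : ℝ → ℝ)
    (hτ : ∀ h₀ ∈ Ioo (0 : ℝ) k, 0 < τ h₀)
    (hsol : ∀ h₀ ∈ Ioo (0 : ℝ) k,
      FwdSol I C₀ a σD α h₀ (H h₀) (F h₀) (G h₀) {t : ℝ | 0 ≤ t ∧ (t : WithTop ℝ) < τ h₀})
    (hmax : ∀ h₀ ∈ Ioo (0 : ℝ) k, ∀ (T' : ℝ) (h' f' g' : ℝ → ℝ),
      FwdSol I C₀ a σD α h₀ h' f' g' (Ico 0 T') → (T' : WithTop ℝ) ≤ τ h₀)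
    (hhit : ∀ h₀ ∈ Ioo (0 : ℝ) k,
      {t : ℝ | 0 < t ∧ (t : WithTop ℝ) < τ h₀ ∧ H h₀ t = k}.Nonempty ∧
      Thit h₀ = sInf {t : ℝ | 0 < t ∧ (t : WithTop ℝ) < τ h₀ ∧ H h₀ t = k})
    (hmono : StrictAntiOn Thit (Ioo 0 k)) :
    ContinuousOn Thit (Ioo 0 k) :=
  stmt11_general I C₀ a σD α k ha hσD hα τ H F G Thit hsol hhit
end

section
/- Suppose h₀ > 0 and that the maximal solution (h, f, g) of the forward ODE system satisfies 0 ≤ h(t) < k for all t in its maximal existence interval [0, τ(h₀)). Then h(t) = h₀ · exp( (2/α) ∫₀^t g(s) ds ) and consequently h(t) ≤ h₀ · exp( ∫₀^t (2 a σ_D² e^{C₃ s}(s + s²/2)/α) ds ) for all t ∈ [0, τ(h₀)). -/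
open Set

/-!
With `X := (a²σ_D²/(2I))·h − C₀` the bounds `0 ≤ h < k` give `|X| ≤ C₃` on `[0, τ)`.
The `h`-equation is linear in `h`, so `h = h₀ · exp((2/α)∫₀ᵗ g)`.
A comparison at the level zero shows `f ≥ 0` (at a zero of `f`, `f' = 1`), hence
`f' ≥ -C₃ f` and `f ≥ e^{-C₃t} > 0`; then `g ≥ 0` (at a zero of `g`, `g' = aσ_D² f > 0`).
The integrating factor `e^{-C₃t}` turns `f' ≤ 1 + C₃ f` into `f ≤ e^{C₃t}(1 + t)` and,
after dropping `-(2/α)g² ≤ 0`,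
`g' ≤ aσ_D² f + C₃ g` into `g ≤ aσ_D² e^{C₃t}(t + t²/2)`; integrating this bound gives
the inequality.
-/

open Real

section ComparisonOnIco

variable {u u' : ℝ → ℝ} {a b : ℝ}

theorem continuousOn_Icc_of_hasDerivWithinAt_Ico
    (hu : ∀ x ∈ Ico a b, HasDerivWithinAt u (u' x) (Ico a b) x) {t : ℝ} (ht : t ∈ Ico a b) :
    ContinuousOn u (Icc a t) :=
  ContinuousOn.mono (fun x hx => (hu x hx).continuousWithinAt) (Icc_subset_Ico_right ht.2)

theorem hasDerivWithinAt_Ici_of_hasDerivWithinAt_Ico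
    (hu : ∀ x ∈ Ico a b, HasDerivWithinAt u (u' x) (Ico a b) x) {t : ℝ} (ht : t ∈ Ico a b) :
    ∀ x ∈ Ico a t, HasDerivWithinAt u (u' x) (Ici x) x := fun x hx =>
  have hx' : x ∈ Ico a b := ⟨hx.1, hx.2.trans ht.2⟩
  (hu x hx').mono_of_mem_nhdsWithin (Ico_mem_nhdsGE_of_mem hx')

theorem nonneg_of_hasDerivWithinAt_pos_of_eq_zero
    (hu : ∀ x ∈ Ico a b, HasDerivWithinAt u (u' x) (Ico a b) x) (ha : 0 ≤ u a)
    (hpos : ∀ x ∈ Ico a b, u x = 0 → 0 < u' x) : ∀ x ∈ Ico a b, 0 ≤ u x := by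
  intro t ht
  have hsub : Ico a t ⊆ Ico a b := Ico_subset_Ico_right ht.2.le
  have hle := image_le_of_deriv_right_lt_deriv_boundary (f := fun x => -u x)
    (f' := fun x => -u' x) (B := fun _ => 0) (B' := fun _ => 0)
    (continuousOn_Icc_of_hasDerivWithinAt_Ico hu ht).neg
    (fun x hx => (hasDerivWithinAt_Ici_of_hasDerivWithinAt_Ico hu ht x hx).neg)
    (neg_nonpos.2 ha) (fun _ => hasDerivAt_const _ _)
    (fun x hx hx0 => neg_neg_of_pos (hpos x (hsub hx) (neg_eq_zero.1 hx0)))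
    (right_mem_Icc.2 ht.1)
  exact neg_nonpos.1 hle

theorem le_exp_mul_of_hasDerivWithinAt_le {B B' : ℝ → ℝ} {C : ℝ}
    (hu : ∀ x ∈ Ico a b, HasDerivWithinAt u (u' x) (Ico a b) x)
    (hB : ∀ x, HasDerivAt B (B' x) x) (ha : u a ≤ exp (C * a) * B a)
    (hle : ∀ x ∈ Ico a b, u' x ≤ C * u x + exp (C * x) * B' x) :
    ∀ x ∈ Ico a b, u x ≤ exp (C * x) * B x := by
  intro t ht
  have hsub : Ico a t ⊆ Ico a b := Ico_subset_Ico_right ht.2.le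
  have hE : ∀ x, HasDerivAt (fun y => exp (-(C * y))) (-C * exp (-(C * x))) x := fun x => by
    simpa [mul_comm] using ((hasDerivAt_id x).const_mul C).neg.exp
  have hu_exp : ∀ x, u x * exp (-(C * x)) ≤ B x ↔ u x ≤ exp (C * x) * B x := fun x => by
    rw [exp_neg, ← div_eq_mul_inv, div_le_iff₀ (exp_pos _), mul_comm]
  have key := image_le_of_deriv_right_le_deriv_boundary
    (f := fun x => u x * exp (-(C * x)))
    (f' := fun x => u' x * exp (-(C * x)) + u x * (-C * exp (-(C * x))))
    ((continuousOn_Icc_of_hasDerivWithinAt_Ico hu ht).mul (by fun_prop))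
    (fun x hx => (hasDerivWithinAt_Ici_of_hasDerivWithinAt_Ico hu ht x hx).mul
      (hE x).hasDerivWithinAt)
    ((hu_exp a).2 ha) (fun x _ => (hB x).continuousAt.continuousWithinAt)
    (fun x _ => (hB x).hasDerivWithinAt) (fun x hx => by
      calc u' x * exp (-(C * x)) + u x * (-C * exp (-(C * x)))
          = (u' x - C * u x) * exp (-(C * x)) := by ring
        _ ≤ exp (C * x) * B' x * exp (-(C * x)) := by
          gcongr
          linarith [hle x (hsub hx)]
        _ = B' x := by rw [mul_right_comm, ← exp_add, add_neg_cancel, exp_zero, one_mul])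
    (right_mem_Icc.2 ht.1)
  exact (hu_exp t).1 key

theorem eq_mul_exp_integral_of_hasDerivWithinAt {φ : ℝ → ℝ}
    (hu : ∀ x ∈ Ico a b, HasDerivWithinAt u (φ x * u x) (Ico a b) x)
    (hφ : ContinuousOn φ (Ico a b)) :
    ∀ x ∈ Ico a b, u x = u a * exp (∫ s in a..x, φ s) := by
  intro t ht
  have hIcc : Icc a t ⊆ Ico a b := Icc_subset_Ico_right ht.2
  have hΦ : ∀ x ∈ Ico a t, HasDerivWithinAt (fun y => ∫ s in a..y, φ s) (φ x) (Ici x) x := by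
    intro x hx
    have hx' : x ∈ Ico a b := ⟨hx.1, hx.2.trans ht.2⟩
    refine intervalIntegral.integral_hasDerivWithinAt_right ?_
      ⟨Ico a b, Ico_mem_nhdsGT_of_mem hx', hφ.aestronglyMeasurable measurableSet_Ico⟩
      ((hφ x hx').mono_of_mem_nhdsWithin (Ico_mem_nhdsGT_of_mem hx'))
    exact (hφ.mono (Icc_subset_Ico_right hx'.2)).intervalIntegrable_of_Icc hx.1
  have hΦ_cont : ContinuousOn (fun y => ∫ s in a..y, φ s) (Icc a t) := by
    simpa [uIcc_of_le ht.1] using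
      intervalIntegral.continuousOn_primitive_interval (μ := MeasureTheory.volume)
        ((hφ.mono hIcc).integrableOn_Icc.mono_set (uIcc_of_le ht.1).subset)
  have hconst := constant_of_has_deriv_right_zero
    (f := fun x => u x * exp (-∫ s in a..x, φ s))
    ((continuousOn_Icc_of_hasDerivWithinAt_Ico hu ht).mul (hΦ_cont.neg.rexp))
    (fun x hx => ((hasDerivWithinAt_Ici_of_hasDerivWithinAt_Ico hu ht x hx).mul
      (hΦ x hx).neg.exp).congr_deriv (by ring)) t (right_mem_Icc.2 ht.1)
  simp only [intervalIntegral.integral_same, neg_zero, exp_zero, mul_one] at hconst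
  rw [← hconst, mul_assoc, ← exp_add, neg_add_cancel, exp_zero, mul_one]

end ComparisonOnIco

section LinearAndRiccati

variable {u v X : ℝ → ℝ} {C τ : ℝ}

theorem exp_neg_mul_le_of_hasDerivWithinAt_one_add_mul
    (hu : ∀ x ∈ Ico 0 τ, HasDerivWithinAt u (1 + u x * X x) (Ico 0 τ) x) (hu0 : u 0 = 1)
    (hX : ∀ x ∈ Ico 0 τ, -C ≤ X x) : ∀ x ∈ Ico 0 τ, exp (-C * x) ≤ u x := by
  have hu_nonneg := nonneg_of_hasDerivWithinAt_pos_of_eq_zero hu (hu0 ▸ zero_le_one)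
    fun x _ hx => by simp [hx]
  intro x hx
  have hle := le_exp_mul_of_hasDerivWithinAt_le (u := fun x => -u x) (C := -C)
    (B := fun _ => -1) (B' := fun _ => 0) (fun x hx => (hu x hx).neg)
    (fun _ => hasDerivAt_const _ _) (by simp [hu0])
    (fun x hx => by
      nlinarith [mul_nonneg (hu_nonneg x hx) (neg_le_iff_add_nonneg.1 (hX x hx))])
    x hx
  linarith

theorem le_exp_mul_mul_one_add_of_hasDerivWithinAt_one_add_mul
    (hu : ∀ x ∈ Ico 0 τ, HasDerivWithinAt u (1 + u x * X x) (Ico 0 τ) x) (hu0 : u 0 = 1)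
    (hu_nonneg : ∀ x ∈ Ico 0 τ, 0 ≤ u x) (hX : ∀ x ∈ Ico 0 τ, |X x| ≤ C) :
    ∀ x ∈ Ico 0 τ, u x ≤ exp (C * x) * (1 + x) :=
  le_exp_mul_of_hasDerivWithinAt_le hu (B := fun x => 1 + x)
    (fun x => (hasDerivAt_id x).const_add 1) (by simp [hu0]) fun x hx => by
      have hexp : 1 ≤ exp (C * x) :=
        one_le_exp (mul_nonneg ((abs_nonneg _).trans (hX x hx)) hx.1)
      nlinarith [mul_le_mul_of_nonneg_left (le_of_abs_le (hX x hx)) (hu_nonneg x hx)]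

variable {p q : ℝ}

theorem nonneg_of_hasDerivWithinAt_riccati
    (hv : ∀ x ∈ Ico 0 τ, HasDerivWithinAt v (p * u x - q * v x ^ 2 + v x * X x) (Ico 0 τ) x)
    (hv0 : v 0 = 0) (hp : 0 < p) (hu : ∀ x ∈ Ico 0 τ, 0 < u x) : ∀ x ∈ Ico 0 τ, 0 ≤ v x :=
  nonneg_of_hasDerivWithinAt_pos_of_eq_zero hv hv0.ge fun x hx hx0 => by
    simpa [hx0] using mul_pos hp (hu x hx)

theorem le_of_hasDerivWithinAt_riccati
    (hv : ∀ x ∈ Ico 0 τ, HasDerivWithinAt v (p * u x - q * v x ^ 2 + v x * X x) (Ico 0 τ) x)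
    (hv0 : v 0 = 0) (hp : 0 ≤ p) (hq : 0 ≤ q) (hv_nonneg : ∀ x ∈ Ico 0 τ, 0 ≤ v x)
    (hX : ∀ x ∈ Ico 0 τ, X x ≤ C) (hu : ∀ x ∈ Ico 0 τ, u x ≤ exp (C * x) * (1 + x)) :
    ∀ x ∈ Ico 0 τ, v x ≤ exp (C * x) * (p * (x + x ^ 2 / 2)) := by
  have hB : ∀ x, HasDerivAt (fun y => p * (y + y ^ 2 / 2)) (p * (1 + x)) x := fun x => by
    simpa using ((hasDerivAt_id x).add ((hasDerivAt_pow 2 x).div_const 2)).const_mul p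
  refine le_exp_mul_of_hasDerivWithinAt_le hv hB (by simp [hv0]) fun x hx => ?_
  have hpu := mul_le_mul_of_nonneg_left (hu x hx) hp
  have hvX := mul_le_mul_of_nonneg_left (hX x hx) (hv_nonneg x hx)
  nlinarith [mul_nonneg hq (sq_nonneg (v x))]

end LinearAndRiccati

theorem abs_mul_sub_le_of_le {c y k C₀ : ℝ} (hc : 0 ≤ c) (hy : 0 ≤ y) (hyk : y ≤ k) :
    |c * y - C₀| ≤ c * k + |C₀| :=
  calc |c * y - C₀| ≤ |c * y| + |C₀| := abs_sub _ _
    _ = c * y + |C₀| := by rw [abs_of_nonneg (mul_nonneg hc hy)]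
    _ ≤ c * k + |C₀| := by gcongr

theorem stmt13_general (I : ℕ) (C₀ a σD α k : ℝ)
    (ha : 0 < a) (hσD : 0 < σD) (hα : 0 < α)
    (h₀ τ : ℝ) (hh₀ : 0 < h₀) (h f g : ℝ → ℝ)
    (hsol : FwdSol I C₀ a σD α h₀ h f g (Ico 0 τ))
    (hbound : ∀ t ∈ Ico (0 : ℝ) τ, 0 ≤ h t ∧ h t < k)
    (C₃ : ℝ) (hC₃ : C₃ = a ^ 2 * σD ^ 2 / (2 * (I : ℝ)) * k + |C₀|) :
    ∀ t ∈ Ico (0 : ℝ) τ,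
      h t = h₀ * Real.exp (2 / α * ∫ s in (0 : ℝ)..t, g s) ∧
      h t ≤ h₀ * Real.exp (∫ s in (0 : ℝ)..t,
        2 * a * σD ^ 2 * Real.exp (C₃ * s) * (s + s ^ 2 / 2) / α) := by
  obtain ⟨hh0, hf0, hg0, hderiv⟩ := hsol
  have hX : ∀ x ∈ Ico 0 τ, |a ^ 2 * σD ^ 2 / (2 * (I : ℝ)) * h x - C₀| ≤ C₃ := fun x hx =>
    hC₃ ▸ abs_mul_sub_le_of_le (by positivity) (hbound x hx).1 (hbound x hx).2.le
  have hf' := fun x hx => (hderiv x hx).2.1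
  have hg' := fun x hx => (hderiv x hx).2.2
  have hf_pos : ∀ x ∈ Ico 0 τ, 0 < f x := fun x hx => (exp_pos _).trans_le
    (exp_neg_mul_le_of_hasDerivWithinAt_one_add_mul hf' hf0 (fun y hy => (abs_le.1 (hX y hy)).1)
      x hx)
  have hf_le := le_exp_mul_mul_one_add_of_hasDerivWithinAt_one_add_mul hf' hf0
    (fun x hx => (hf_pos x hx).le) hX
  have hg_nonneg := nonneg_of_hasDerivWithinAt_riccati hg' hg0 (by positivity) hf_pos
  have hg_le := le_of_hasDerivWithinAt_riccati hg' hg0 (by positivity) (by positivity) hg_nonneg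
    (fun x hx => le_of_abs_le (hX x hx)) hf_le
  have hg_cont : ContinuousOn g (Ico 0 τ) := fun x hx => (hg' x hx).continuousWithinAt
  have hh_eq := eq_mul_exp_integral_of_hasDerivWithinAt (φ := fun s => 2 / α * g s)
    (fun x hx => (hderiv x hx).1.congr_deriv (by ring)) (continuousOn_const.mul hg_cont)
  intro t ht
  rw [hh_eq t ht, hh0, intervalIntegral.integral_const_mul]
  refine ⟨rfl, mul_le_mul_of_nonneg_left (exp_le_exp.2 ?_) hh₀.le⟩
  rw [← intervalIntegral.integral_const_mul]
  refine intervalIntegral.integral_mono_on ht.1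
    (((continuousOn_const.mul hg_cont).mono (Icc_subset_Ico_right ht.2)).intervalIntegrable_of_Icc
      ht.1) (Continuous.intervalIntegrable (by fun_prop) _ _) fun s hs => ?_
  calc 2 / α * g s
      ≤ 2 / α * (exp (C₃ * s) * (a * σD ^ 2 * (s + s ^ 2 / 2))) := by
        gcongr
        exact hg_le s ⟨hs.1, hs.2.trans_lt ht.2⟩
    _ = 2 * a * σD ^ 2 * exp (C₃ * s) * (s + s ^ 2 / 2) / α := by ring

/-- if `h₀ > 0` and `0 ≤ h < k` on the (maximal) interval of existence `[0,τ)`,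
then `h t = h₀ · exp((2/α)∫₀ᵗ g)` and consequently
`h t ≤ h₀ · exp(∫₀ᵗ 2aσ_D² e^{C₃s}(s+s²/2)/α ds)` there. -/
theorem stmt13 (I : ℕ) (hI : 1 ≤ I) (C₀ T a σD α k : ℝ)
    (hT : 0 < T) (ha : 0 < a) (hσD : 0 < σD) (hα : 0 < α) (hk : 0 < k)
    (h₀ τ : ℝ) (hh₀ : 0 < h₀) (hτ : 0 < τ) (h f g : ℝ → ℝ)
    (hsol : FwdSol I C₀ a σD α h₀ h f g (Ico 0 τ))
    (hbound : ∀ t ∈ Ico (0 : ℝ) τ, 0 ≤ h t ∧ h t < k)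
    (C₃ : ℝ) (hC₃ : C₃ = a ^ 2 * σD ^ 2 / (2 * (I : ℝ)) * k + |C₀|) :
    ∀ t ∈ Ico (0 : ℝ) τ,
      h t = h₀ * Real.exp (2 / α * ∫ s in (0 : ℝ)..t, g s) ∧
      h t ≤ h₀ * Real.exp (∫ s in (0 : ℝ)..t,
        2 * a * σD ^ 2 * Real.exp (C₃ * s) * (s + s ^ 2 / 2) / α) :=
  stmt13_general I C₀ a σD α k ha hσD hα h₀ τ hh₀ h f g hsol hbound C₃ hC₃
end
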